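/- Let α₁,…,α_g be unit complex numbers, t_i = α_i + α_i^{-1}, and let a_j denote the j-th elementary symmetric polynomial of the 2g numbers α₁, α₁^{-1}, …, α_g, α_g^{-1}, and s_i the i-th elementary symmetric polynomial of t₁,…,t_g (with a₀ = s₀ = 1). Then for 0 ≤ j ≤ g, a_j = Σ_{i=0}^{g} c_{i,j} s_i where c_{i,j} = binom(g-i, g-(i+j)/2) if i + j is even and c_{i,j} = 0 if i + j is odd. -/

import Mathlib

/-!
Pairing `α` with `α⁻¹` gives `(X + α)(X + α⁻¹) = t X + (X² + 1)`, so the polynomial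
`∏ (X + r)` over the `2g` numbers `α_i^{±1}`, whose coefficient of `X^(2g-j)` is `a_j`, equals
`∏ (t_i X + (X² + 1)) = ∑_k s_k X^k (X² + 1)^(g-k)`. Reading off the coefficient of
`X^(2g-j)` with the binomial theorem for `(X² + 1)^(g-k)` gives the `c_{k,j}`.
-/

open Polynomial Finset

section CommSemiring

variable {R : Type*} [CommSemiring R]

theorem Finset.prod_mul_add_eq_sum_esymm {ι : Type*} (s : Finset ι) (t : ι → R) (y z : R) :
    ∏ i ∈ s, (t i * y + z) =
      ∑ k ∈ range (#s + 1), (s.val.map t).esymm k * y ^ k * z ^ (#s - k) := by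
  classical
  rw [prod_add, powerset_card_biUnion,
    sum_biUnion fun i _ j _ hij => pairwise_disjoint_powersetCard _ hij]
  refine sum_congr rfl fun k _ => ?_
  rw [esymm_map_val, sum_mul, sum_mul]
  refine sum_congr rfl fun S hS => ?_
  obtain ⟨hSs, rfl⟩ := mem_powersetCard.mp hS
  rw [prod_mul_distrib, prod_const, prod_const, card_sdiff_of_subset hSs]

theorem Polynomial.coeff_X_sq_add_one_pow (n d : ℕ) :
    ((X ^ 2 + 1 : R[X]) ^ n).coeff d = if 2 ∣ d then (n.choose (d / 2) : R) else 0 := by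
  have hexpand : (X ^ 2 + 1 : R[X]) ^ n = expand R 2 ((X + 1) ^ n) := by simp
  rw [hexpand, coeff_expand two_pos, coeff_X_add_one_pow]

theorem Polynomial.coeff_X_pow_mul_X_sq_add_one_pow {n k d : ℕ} (hkd : k ≤ d) :
    (X ^ k * (X ^ 2 + 1 : R[X]) ^ n).coeff d =
      if 2 ∣ d - k then (n.choose ((d - k) / 2) : R) else 0 := by
  rw [coeff_X_pow_mul', if_pos hkd, coeff_X_sq_add_one_pow]

end CommSemiring

section Field

variable {K : Type*} [Field K]

theorem Polynomial.X_add_C_mul_X_add_C_inv {a : K} (ha : a ≠ 0) :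
    (X + C a) * (X + C a⁻¹) = C (a + a⁻¹) * X + (X ^ 2 + 1) := by
  have hC : C a * C a⁻¹ = 1 := by rw [← C_mul, mul_inv_cancel₀ ha, C_1]
  rw [C_add]
  linear_combination hC

theorem prod_X_add_C_self_and_inv_eq_sum_esymm {ι : Type*} [Fintype ι] (α : ι → K)
    (hα : ∀ i, α i ≠ 0) :
    ((univ.val.map α + univ.val.map fun i => (α i)⁻¹).map fun r => X + C r).prod =
      ∑ k ∈ range (Fintype.card ι + 1),
        C ((univ.val.map fun i => α i + (α i)⁻¹).esymm k) *
          (X ^ k * (X ^ 2 + 1) ^ (Fintype.card ι - k)) := by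
  have hpair : ((univ.val.map α + univ.val.map fun i => (α i)⁻¹).map fun r => X + C r).prod =
      ∏ i, (C (α i + (α i)⁻¹) * X + (X ^ 2 + 1)) := by
    simp only [Multiset.map_add, Multiset.prod_add, Multiset.map_map, Function.comp_def,
      ← Finset.prod_eq_multiset_prod, ← prod_mul_distrib, X_add_C_mul_X_add_C_inv (hα _)]
  rw [hpair, prod_mul_add_eq_sum_esymm, card_univ]
  refine sum_congr rfl fun k _ => ?_
  simp only [esymm_map_val, map_sum, map_prod]
  ring

end Field

theorem stmt9_general (g : ℕ) (α : Fin g → ℂ) (hα : ∀ i, ‖α i‖ = 1)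
    (j : ℕ) (hj : j ≤ g) :
    let M : Multiset ℂ :=
      (Finset.univ.val.map α) + (Finset.univ.val.map fun i => (α i)⁻¹)
    let a : ℕ → ℂ := fun j => M.esymm j
    let s : ℕ → ℂ := fun i => (Finset.univ.val.map fun i => α i + (α i)⁻¹).esymm i
    let c : ℕ → ℕ → ℂ := fun i j =>
      if Even (i + j) then ((g - i).choose (g - (i + j) / 2) : ℂ) else 0
    a j = ∑ i ∈ Finset.range (g + 1), c i j * s i := by
  intro M a s c
  have hα0 (i : Fin g) : α i ≠ 0 := norm_ne_zero_iff.mp (by rw [hα i]; exact one_ne_zero)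
  have hcardM : Multiset.card M = 2 * g := by simp [M, two_mul]
  have ha : a j = (M.map fun r => X + C r).prod.coeff (2 * g - j) := by
    rw [Multiset.prod_X_add_C_coeff M (by omega), hcardM, Nat.sub_sub_self (by omega)]
  rw [ha, prod_X_add_C_self_and_inv_eq_sum_esymm α hα0, Fintype.card_fin, finsetSum_coeff]
  refine sum_congr rfl fun k hk => ?_
  have hkg : k ≤ g := Nat.lt_succ_iff.mp (mem_range.mp hk)
  rw [coeff_C_mul, coeff_X_pow_mul_X_sq_add_one_pow (by omega), mul_comm]
  have hparity : 2 ∣ 2 * g - j - k ↔ Even (k + j) := by rw [Nat.even_iff]; omega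
  simp only [c, ← hparity]
  split_ifs with heven
  · congr 3; omega
  · rfl

/-- For unit complex numbers `α i` with `t i = α i + (α i)⁻¹`, let
`a j = e_j(α₁, α₁⁻¹, …, α_g, α_g⁻¹)` and `s i = e_i(t₁, …, t_g)`. Then for `0 ≤ j ≤ g`,
`a j = ∑_{i=0}^g c i j * s i`, where `c i j = binom(g-i, g-(i+j)/2)` if `i + j` is even
(`binom(n,k) = 0` for `k > n`) and `c i j = 0` if `i + j` is odd. -/
theorem stmt9 (g : ℕ) (hg : 0 < g) (α : Fin g → ℂ) (hα : ∀ i, ‖α i‖ = 1)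
    (j : ℕ) (hj : j ≤ g) :
    let M : Multiset ℂ :=
      (Finset.univ.val.map α) + (Finset.univ.val.map fun i => (α i)⁻¹)
    let a : ℕ → ℂ := fun j => M.esymm j
    let s : ℕ → ℂ := fun i => (Finset.univ.val.map fun i => α i + (α i)⁻¹).esymm i
    let c : ℕ → ℕ → ℂ := fun i j =>
      if Even (i + j) then ((g - i).choose (g - (i + j) / 2) : ℂ) else 0
    a j = ∑ i ∈ Finset.range (g + 1), c i j * s i :=
  stmt9_general g α hα j hj
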